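/- Let g = log ρ − ½U and let M(t,x,v) denote the 2n×2n Hessian matrix of g in the (x,v)-variables, written in n×n blocks M = [[g_{xx}, g_{xv}],[g_{xv}ᵀ, g_{vv}]]. Then M satisfies the matrix evolution equation ∂_t M = Δ_v M + 2⟨∇_v g, ∇_v M⟩ − ⟨v, ∇_x M⟩ + MC + Cᵀ M + M D M + ∇²h at every point of (0,T)×ℝⁿ×ℝⁿ, where the operators Δ_v, ∇_v, ∇_x act entrywise on M, and ⟨∇_v g, ∇_v M⟩ denotes the matrix with entries ⟨∇_v g, ∇_v M_{ij}⟩. -/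

import Mathlib

noncomputable section
open Real Set Matrix

/-- `ℝⁿ` with the Euclidean norm. -/
abbrev E (n : ℕ) := EuclideanSpace ℝ (Fin n)

/-- The standard basis of `ℝⁿ × ℝⁿ`, indexed by `Fin n ⊕ Fin n`: `Sum.inl i` is the `i`-th
`x`-direction and `Sum.inr i` is the `i`-th `v`-direction. -/
def stdBasis (n : ℕ) : Fin n ⊕ Fin n → E n × E n
  | Sum.inl i => (EuclideanSpace.single i 1, 0)
  | Sum.inr i => (0, EuclideanSpace.single i 1)

/-- Partial derivative of `φ : ℝⁿ × ℝⁿ → ℝ` in the `j`-th coordinate direction. -/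
def pd {n : ℕ} (φ : E n × E n → ℝ) (j : Fin n ⊕ Fin n) (p : E n × E n) : ℝ :=
  fderiv ℝ φ p (stdBasis n j)

/-- The full Hessian of `φ` in the variables `(x, v)`, as a `2n × 2n` matrix. -/
def Hess {n : ℕ} (φ : E n × E n → ℝ) (p : E n × E n) :
    Matrix (Fin n ⊕ Fin n) (Fin n ⊕ Fin n) ℝ :=
  Matrix.of fun i j => pd (pd φ j) i p

/-- The Laplacian in the `v`-variables: `Δ_v φ = Σᵢ ∂²φ/∂vᵢ²`. -/
def lapV {n : ℕ} (φ : E n × E n → ℝ) (p : E n × E n) : ℝ :=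
  ∑ i : Fin n, pd (pd φ (Sum.inr i)) (Sum.inr i) p

/-- The squared Euclidean norm of the full gradient `∇φ`. -/
def gradNormSq {n : ℕ} (φ : E n × E n → ℝ) (p : E n × E n) : ℝ :=
  ∑ j : Fin n ⊕ Fin n, (pd φ j p) ^ 2

/-- The function `h = -½⟨v, ∇ₓU⟩ + ½Δ_v U - ¼|∇_v U|²`. -/
def hfun {n : ℕ} (U : E n × E n → ℝ) (p : E n × E n) : ℝ :=
  -(1/2) * (∑ i : Fin n, p.2 i * pd U (Sum.inl i) p) + (1/2) * lapV U p
    - (1/4) * ∑ i : Fin n, (pd U (Sum.inr i) p) ^ 2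

/-- The block-diagonal matrix `[[a·I, 0], [0, b·I]]`. -/
def blockDiag (n : ℕ) (a b : ℝ) : Matrix (Fin n ⊕ Fin n) (Fin n ⊕ Fin n) ℝ :=
  Matrix.fromBlocks (a • 1) 0 0 (b • 1)

/-- The right-hand side `½·[[-(s₁/s₀)I, (s₂/s₀)I], [(s₂/s₀)I, -(s₀'/s₀)I]]` of the
matrix differential Harnack inequality. -/
def harnackMatrix (n : ℕ) (s₀ s₁ s₂ : ℝ → ℝ) (t : ℝ) :
    Matrix (Fin n ⊕ Fin n) (Fin n ⊕ Fin n) ℝ :=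
  (1/2 : ℝ) • Matrix.fromBlocks (-(s₁ t / s₀ t) • 1) ((s₂ t / s₀ t) • 1)
    ((s₂ t / s₀ t) • 1) (-(deriv s₀ t / s₀ t) • 1)

/-- The `2n × 2n` matrix `C = [[0, −I], [0, 0]]` in `n × n` block form. -/
def Cmat (n : ℕ) : Matrix (Fin n ⊕ Fin n) (Fin n ⊕ Fin n) ℝ :=
  Matrix.fromBlocks 0 (-1) 0 0

/-- The `2n × 2n` matrix `D = [[0, 0], [0, 2I]]` in `n × n` block form. -/
def Dmat (n : ℕ) : Matrix (Fin n ⊕ Fin n) (Fin n ⊕ Fin n) ℝ :=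
  Matrix.fromBlocks 0 0 0 ((2 : ℝ) • 1)

namespace HEvol

variable {F : Type*} [NormedAddCommGroup F] [NormedSpace ℝ F]

def Dd (w : F) (f : F → ℝ) : F → ℝ := fun q => fderiv ℝ f q w

lemma DiffOn.at {s : Set F} (hs : IsOpen s) {f : F → ℝ} (hf : ContDiffOn ℝ (⊤ : ℕ∞) f s)
    {q : F} (hq : q ∈ s) : DifferentiableAt ℝ f q :=
  (hf.differentiableOn (by simp)).differentiableAt (hs.mem_nhds hq)

lemma Dd_smoothOn {s : Set F} (hs : IsOpen s) {f : F → ℝ} (hf : ContDiffOn ℝ (⊤ : ℕ∞) f s) (w : F) :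
    ContDiffOn ℝ (⊤ : ℕ∞) (Dd w f) s :=
  (hf.fderiv_of_isOpen hs (by simp)).clm_apply contDiffOn_const

lemma Dd_congr_nhds {f g : F → ℝ} {q : F} (h : f =ᶠ[nhds q] g) (w : F) :
    Dd w f q = Dd w g q := by
  unfold Dd; rw [h.fderiv_eq]

lemma Dd_congr_on {s : Set F} (hs : IsOpen s) {f g : F → ℝ}
    (h : ∀ x ∈ s, f x = g x) {q : F} (hq : q ∈ s) (w : F) :
    Dd w f q = Dd w g q :=
  Dd_congr_nhds (by filter_upwards [hs.mem_nhds hq] using h) w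

lemma Dd_swap {s : Set F} (hs : IsOpen s) {f : F → ℝ} (hf : ContDiffOn ℝ (⊤ : ℕ∞) f s)
    {q : F} (hq : q ∈ s) (w w' : F) : Dd w (Dd w' f) q = Dd w' (Dd w f) q := by
  have hf' : ContDiffOn ℝ (⊤ : ℕ∞) (fderiv ℝ f) s := hf.fderiv_of_isOpen hs (by simp)
  have hg : DifferentiableAt ℝ (fderiv ℝ f) q :=
    (hf'.differentiableOn (by simp)).differentiableAt (hs.mem_nhds hq)
  have hsymm := second_derivative_symmetric_of_eventually
    (f := f) (f' := fderiv ℝ f) (x := q) (f'' := fderiv ℝ (fderiv ℝ f) q)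
    (by filter_upwards [hs.mem_nhds hq] with y hy
        exact (DiffOn.at hs hf hy).hasFDerivAt)
    hg.hasFDerivAt
  have key : ∀ u u' : F, Dd u (Dd u' f) q = fderiv ℝ (fderiv ℝ f) q u u' := by
    intro u u'
    have h1 : HasFDerivAt (fun y => fderiv ℝ f y u')
        ((ContinuousLinearMap.apply ℝ ℝ u').comp (fderiv ℝ (fderiv ℝ f) q)) q :=
      (ContinuousLinearMap.apply ℝ ℝ u').hasFDerivAt.comp q hg.hasFDerivAt
    show fderiv ℝ (fun y => fderiv ℝ f y u') q u = _
    rw [h1.fderiv]; rfl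
  rw [key, key, hsymm w' w]

lemma Dd_cycle {s : Set F} (hs : IsOpen s) {f : F → ℝ} (hf : ContDiffOn ℝ (⊤ : ℕ∞) f s)
    {q : F} (hq : q ∈ s) (w1 w2 w3 : F) :
    Dd w1 (Dd w2 (Dd w3 f)) q = Dd w3 (Dd w1 (Dd w2 f)) q := by
  have h1 : Dd w1 (Dd w2 (Dd w3 f)) q = Dd w1 (Dd w3 (Dd w2 f)) q :=
    Dd_congr_on hs (fun x hx => Dd_swap hs hf hx w2 w3) hq w1
  rw [h1, Dd_swap hs (Dd_smoothOn hs hf w2) hq w1 w3]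

lemma Dd_add {f g : F → ℝ} {q : F} (hf : DifferentiableAt ℝ f q)
    (hg : DifferentiableAt ℝ g q) (w : F) :
    Dd w (fun x => f x + g x) q = Dd w f q + Dd w g q := by
  unfold Dd; rw [fderiv_fun_add hf hg]; rfl

lemma Dd_sub {f g : F → ℝ} {q : F} (hf : DifferentiableAt ℝ f q)
    (hg : DifferentiableAt ℝ g q) (w : F) :
    Dd w (fun x => f x - g x) q = Dd w f q - Dd w g q := by
  unfold Dd; rw [fderiv_fun_sub hf hg]; rfl

lemma Dd_mul {f g : F → ℝ} {q : F} (hf : DifferentiableAt ℝ f q)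
    (hg : DifferentiableAt ℝ g q) (w : F) :
    Dd w (fun x => f x * g x) q = f q * Dd w g q + g q * Dd w f q := by
  unfold Dd; rw [fderiv_fun_mul hf hg]; simp

lemma Dd_const_mul {f : F → ℝ} {q : F} (hf : DifferentiableAt ℝ f q) (c : ℝ) (w : F) :
    Dd w (fun x => c * f x) q = c * Dd w f q := by
  unfold Dd; rw [fderiv_const_mul hf c]; simp

lemma Dd_div_const {f : F → ℝ} {q : F} (hf : DifferentiableAt ℝ f q) (c : ℝ) (w : F) :
    Dd w (fun x => f x / c) q = Dd w f q / c := by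
  unfold Dd
  simp only [div_eq_mul_inv]
  rw [fderiv_mul_const hf c⁻¹]
  simp [mul_comm]

lemma Dd_sum {ι : Type*} {s : Finset ι} {f : ι → F → ℝ} {q : F}
    (h : ∀ i ∈ s, DifferentiableAt ℝ (f i) q) (w : F) :
    Dd w (fun x => ∑ i ∈ s, f i x) q = ∑ i ∈ s, Dd w (f i) q := by
  unfold Dd; rw [fderiv_fun_sum h]; simp

lemma Dd_clm (L : F →L[ℝ] ℝ) (q w : F) : Dd w (fun x => L x) q = L w := by
  unfold Dd; rw [L.fderiv]

abbrev QQ (n : ℕ) := ℝ × (E n × E n)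
def wd (n : ℕ) (j : Fin n ⊕ Fin n) : QQ n := ((0 : ℝ), stdBasis n j)
def td (n : ℕ) : QQ n := ((1 : ℝ), (0 : E n × E n))

def Rf (n : ℕ) (ρ : ℝ → E n × E n → ℝ) : QQ n → ℝ := fun q => ρ q.1 q.2
def Uf (n : ℕ) (U : E n × E n → ℝ) : QQ n → ℝ := fun q => U q.2
def Phi (n : ℕ) (U : E n × E n → ℝ) (ρ : ℝ → E n × E n → ℝ) : QQ n → ℝ :=
  fun q => Real.log (ρ q.1 q.2) - U q.2 / 2
def Hf (n : ℕ) (U : E n × E n → ℝ) : QQ n → ℝ := fun q => hfun U q.2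

variable {P : Type*} [NormedAddCommGroup P] [NormedSpace ℝ P]

lemma bridge_snd {Ψ : ℝ × P → ℝ} {t : ℝ} {p : P} (h : DifferentiableAt ℝ Ψ (t, p)) (w : P) :
    fderiv ℝ (fun x => Ψ (t, x)) p w = Dd ((0 : ℝ), w) Ψ (t, p) := by
  have h1 : HasFDerivAt (fun x : P => Ψ (t, x))
      ((fderiv ℝ Ψ (t, p)).comp (ContinuousLinearMap.inr ℝ ℝ P)) p :=
    h.hasFDerivAt.comp p (hasFDerivAt_prodMk_right t p)
  rw [h1.fderiv]; rfl

lemma bridge_fst {Ψ : ℝ × P → ℝ} {t : ℝ} {p : P} (h : DifferentiableAt ℝ Ψ (t, p)) :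
    deriv (fun τ => Ψ (τ, p)) t = Dd ((1 : ℝ), (0 : P)) Ψ (t, p) := by
  have h1 : HasFDerivAt (fun τ : ℝ => Ψ (τ, p))
      ((fderiv ℝ Ψ (t, p)).comp (ContinuousLinearMap.inl ℝ ℝ P)) t :=
    h.hasFDerivAt.comp t (hasFDerivAt_prodMk_left t p)
  rw [← fderiv_apply_one_eq_deriv, h1.fderiv]; rfl

lemma Dd_comp_snd {f : P → ℝ} {q : ℝ × P} (hf : DifferentiableAt ℝ f q.2) (w : ℝ × P) :
    Dd w (fun x : ℝ × P => f x.2) q = fderiv ℝ f q.2 w.2 := by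
  have h1 : HasFDerivAt (fun x : ℝ × P => f x.2)
      ((fderiv ℝ f q.2).comp (ContinuousLinearMap.snd ℝ ℝ P)) q :=
    hf.hasFDerivAt.comp q (hasFDerivAt_snd (p := q))
  show fderiv ℝ _ q w = _
  rw [h1.fderiv]; rfl

lemma pd_bridge {n : ℕ} {Ψ : QQ n → ℝ} {t : ℝ} (h : ∀ x, DifferentiableAt ℝ Ψ (t, x))
    (j : Fin n ⊕ Fin n) (p : E n × E n) :
    pd (fun x => Ψ (t, x)) j p = Dd (wd n j) Ψ (t, p) := bridge_snd (h p) _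

lemma Hess_bridge {n : ℕ} {Ψ : QQ n → ℝ} {t : ℝ} (h : ∀ x, DifferentiableAt ℝ Ψ (t, x))
    (h2 : ∀ b x, DifferentiableAt ℝ (Dd (wd n b) Ψ) (t, x)) (a b : Fin n ⊕ Fin n)
    (p : E n × E n) :
    Hess (fun x => Ψ (t, x)) p a b = Dd (wd n a) (Dd (wd n b) Ψ) (t, p) := by
  show pd (pd (fun x => Ψ (t, x)) b) a p = _
  have e1 : pd (fun x => Ψ (t, x)) b = fun x => Dd (wd n b) Ψ (t, x) :=
    funext fun x => pd_bridge h b x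
  rw [e1]
  exact pd_bridge (h2 b) a p

lemma Dd_cV {n : ℕ} (i : Fin n) (q w : QQ n) :
    Dd w (fun q' : QQ n => q'.2.2 i) q = w.2.2 i := by
  have hfun : (fun q' : QQ n => q'.2.2 i) = fun q' : QQ n =>
      ((EuclideanSpace.proj i).comp ((ContinuousLinearMap.snd ℝ (E n) (E n)).comp
        (ContinuousLinearMap.snd ℝ ℝ (E n × E n)))) q' := by
    funext q'; simp
  rw [hfun]
  show fderiv ℝ _ q w = _
  rw [ContinuousLinearMap.fderiv]; simp

lemma stdBasis_snd_inl {n : ℕ} (j : Fin n) : (stdBasis n (Sum.inl j)).2 = 0 := rfl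
lemma stdBasis_snd_inr {n : ℕ} (j i : Fin n) :
    (stdBasis n (Sum.inr j)).2 i = if i = j then 1 else 0 := by
  show (EuclideanSpace.single j (1:ℝ)) i = _
  rw [EuclideanSpace.single_apply]

lemma diffcV {n : ℕ} (i : Fin n) : Differentiable ℝ (fun q' : QQ n => q'.2.2 i) := by
  have hfun : (fun q' : QQ n => q'.2.2 i) = fun q' : QQ n =>
      ((EuclideanSpace.proj i).comp ((ContinuousLinearMap.snd ℝ (E n) (E n)).comp
        (ContinuousLinearMap.snd ℝ ℝ (E n × E n)))) q' := by
    funext q'; simp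
  rw [hfun]; exact (ContinuousLinearMap.differentiable _)

lemma matrix_term (n : ℕ) (M : Matrix (Fin n ⊕ Fin n) (Fin n ⊕ Fin n) ℝ)
    (a b : Fin n ⊕ Fin n) :
    (M * Cmat n + (Cmat n)ᵀ * M + M * Dmat n * M) a b
      = -(Sum.elim (fun _ => (0 : ℝ)) (fun j => M a (Sum.inl j)) b)
        - Sum.elim (fun _ => (0 : ℝ)) (fun i => M (Sum.inl i) b) a
        + 2 * ∑ i : Fin n, M a (Sum.inr i) * M (Sum.inr i) b := by
  have h1 : (M * Cmat n) a b = -(Sum.elim (fun _ => (0 : ℝ)) (fun j => M a (Sum.inl j)) b) := by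
    rw [Matrix.mul_apply]
    rcases b with j | j
    · simp [Cmat, Fintype.sum_sum_type, Matrix.fromBlocks]
    · simp [Cmat, Fintype.sum_sum_type, Matrix.fromBlocks, Matrix.one_apply, mul_ite,
        Finset.sum_ite_eq']
  have h2 : ((Cmat n)ᵀ * M) a b = -(Sum.elim (fun _ => (0 : ℝ)) (fun i => M (Sum.inl i) b) a) := by
    rw [Matrix.mul_apply]
    rcases a with i | i
    · simp [Cmat, Fintype.sum_sum_type, Matrix.fromBlocks]
    · simp [Cmat, Fintype.sum_sum_type, Matrix.fromBlocks, Matrix.one_apply, ite_mul,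
        Finset.sum_ite_eq]
  have h3 : (M * Dmat n * M) a b = 2 * ∑ i : Fin n, M a (Sum.inr i) * M (Sum.inr i) b := by
    have hMD : ∀ l, (M * Dmat n) a l =
        Sum.elim (fun _ => (0 : ℝ)) (fun j => 2 * M a (Sum.inr j)) l := by
      intro l
      rw [Matrix.mul_apply]
      rcases l with j | j
      · simp [Dmat, Fintype.sum_sum_type, Matrix.fromBlocks]
      · simp [Dmat, Fintype.sum_sum_type, Matrix.fromBlocks, Matrix.one_apply, mul_ite,
          Finset.sum_ite_eq', mul_comm]
    rw [Matrix.mul_apply, Fintype.sum_sum_type]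
    simp only [hMD]
    simp [Finset.mul_sum, mul_assoc]
  rw [Matrix.add_apply, Matrix.add_apply, h1, h2, h3]
  ring

lemma pd_contDiff {n : ℕ} {φ : E n × E n → ℝ} (hφ : ContDiff ℝ (⊤ : ℕ∞) φ) (j : Fin n ⊕ Fin n) :
    ContDiff ℝ (⊤ : ℕ∞) (pd φ j) :=
  (hφ.fderiv_right (by simp)).clm_apply contDiff_const

lemma hfun_contDiff {n : ℕ} {U : E n × E n → ℝ} (hU : ContDiff ℝ (⊤ : ℕ∞) U) :
    ContDiff ℝ (⊤ : ℕ∞) (hfun U) := by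
  have hc : ∀ i : Fin n, ContDiff ℝ (⊤ : ℕ∞) (fun p : E n × E n => p.2 i) := fun i => by
    simpa [Function.comp_def] using (EuclideanSpace.proj (𝕜 := ℝ) i).contDiff.comp
      (contDiff_snd (E := E n) (F := E n))
  exact ContDiff.sub
    (ContDiff.add
      (contDiff_const.mul (ContDiff.sum fun i _ => (hc i).mul (pd_contDiff hU _)))
      (contDiff_const.mul (ContDiff.sum fun i _ => pd_contDiff (pd_contDiff hU _) _)))
    (contDiff_const.mul (ContDiff.sum fun i _ => (pd_contDiff hU _).pow 2))

end HEvol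
namespace HEvol

lemma scalarPDE (n : ℕ) (T : ℝ) (U : E n × E n → ℝ) (hU : ContDiff ℝ (⊤ : ℕ∞) U)
    (ρ : ℝ → E n × E n → ℝ)
    (hρ : ContDiffOn ℝ (⊤ : ℕ∞) (fun q : ℝ × (E n × E n) => ρ q.1 q.2) (Ioo 0 T ×ˢ univ))
    (hpos : ∀ t ∈ Ioo 0 T, ∀ p : E n × E n, 0 < ρ t p)
    (hpde : ∀ t ∈ Ioo 0 T, ∀ p : E n × E n,
      deriv (fun τ => ρ τ p) t =
        lapV (ρ t) p - (∑ i : Fin n, pd U (Sum.inr i) p * pd (ρ t) (Sum.inr i) p)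
          - ∑ i : Fin n, p.2 i * pd (ρ t) (Sum.inl i) p) :
    ∀ q ∈ (Ioo 0 T ×ˢ univ : Set (QQ n)),
      Dd (td n) (Phi n U ρ) q
        = (∑ i : Fin n, Dd (wd n (Sum.inr i)) (Dd (wd n (Sum.inr i)) (Phi n U ρ)) q)
          + (∑ i : Fin n, (Dd (wd n (Sum.inr i)) (Phi n U ρ) q) ^ 2)
          - (∑ i : Fin n, q.2.2 i * Dd (wd n (Sum.inl i)) (Phi n U ρ) q)
          + hfun U q.2 := by
  have hΩ : IsOpen (Ioo 0 T ×ˢ univ : Set (QQ n)) := isOpen_Ioo.prod isOpen_univ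
  set Ω : Set (QQ n) := Ioo 0 T ×ˢ univ with hΩdef
  have hmem : ∀ {τ : ℝ}, τ ∈ Ioo 0 T → ∀ x : E n × E n, ((τ, x) : QQ n) ∈ Ω :=
    fun hτ x => ⟨hτ, mem_univ x⟩
  have hR : ContDiffOn ℝ (⊤ : ℕ∞) (Rf n ρ) Ω := hρ
  have hRpos : ∀ q ∈ Ω, 0 < Rf n ρ q := fun q hq => hpos q.1 hq.1 q.2
  have hRne : ∀ q ∈ Ω, Rf n ρ q ≠ 0 := fun q hq => (hRpos q hq).ne'
  have hUf : ContDiff ℝ (⊤ : ℕ∞) (Uf n U) := hU.comp contDiff_snd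
  have hΦ : ContDiffOn ℝ (⊤ : ℕ∞) (Phi n U ρ) Ω :=
    (hR.log hRne).sub (hUf.contDiffOn.div_const (2 : ℝ))
  have hDU : ∀ w : QQ n, Differentiable ℝ (Dd w (Uf n U)) := fun w =>
    ((hUf.fderiv_right (m := (⊤ : ℕ∞)) (by simp)).clm_apply contDiff_const).differentiable (by simp)
  -- joint form of the PDE
  have jointPDE : ∀ q ∈ Ω, Dd (td n) (Rf n ρ) q
      = (∑ i : Fin n, Dd (wd n (Sum.inr i)) (Dd (wd n (Sum.inr i)) (Rf n ρ)) q)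
        - (∑ i : Fin n, Dd (wd n (Sum.inr i)) (Uf n U) q * Dd (wd n (Sum.inr i)) (Rf n ρ) q)
        - (∑ i : Fin n, q.2.2 i * Dd (wd n (Sum.inl i)) (Rf n ρ) q) := by
    rintro ⟨τ, y⟩ hq
    have hτ : τ ∈ Ioo 0 T := hq.1
    have h0 := hpde τ hτ y
    have hdR : ∀ x, DifferentiableAt ℝ (Rf n ρ) (τ, x) := fun x =>
      DiffOn.at hΩ hR (hmem hτ x)
    have hdDR : ∀ (i : Fin n) x, DifferentiableAt ℝ (Dd (wd n (Sum.inr i)) (Rf n ρ)) (τ, x) :=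
      fun i x => DiffOn.at hΩ (Dd_smoothOn hΩ hR _) (hmem hτ x)
    have e1 : lapV (ρ τ) y
        = ∑ i : Fin n, Dd (wd n (Sum.inr i)) (Dd (wd n (Sum.inr i)) (Rf n ρ)) (τ, y) := by
      unfold lapV
      refine Finset.sum_congr rfl fun i _ => ?_
      have e0 : pd (ρ τ) (Sum.inr i) = fun x => Dd (wd n (Sum.inr i)) (Rf n ρ) (τ, x) :=
        funext fun x => pd_bridge (Ψ := Rf n ρ) hdR (Sum.inr i) x
      rw [e0]
      exact pd_bridge (Ψ := Dd (wd n (Sum.inr i)) (Rf n ρ)) (hdDR i) (Sum.inr i) y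
    have e2 : ∀ i : Fin n, pd U (Sum.inr i) y = Dd (wd n (Sum.inr i)) (Uf n U) (τ, y) :=
      fun i => pd_bridge (Ψ := Uf n U) (fun x => (hUf.differentiable (by simp)) (τ, x))
        (Sum.inr i) y
    have e3 : ∀ j, pd (ρ τ) j y = Dd (wd n j) (Rf n ρ) (τ, y) := fun j =>
      pd_bridge (Ψ := Rf n ρ) hdR j y
    have e4 : deriv (fun σ => ρ σ y) τ = Dd (td n) (Rf n ρ) (τ, y) :=
      bridge_fst (Ψ := Rf n ρ) (hdR y)
    rw [e1, e4] at h0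
    simp only [e2, e3] at h0
    exact h0
  -- the log-derivative identity
  have star : ∀ (w : QQ n), ∀ q ∈ Ω, Dd w (Rf n ρ) q
      = Rf n ρ q * (Dd w (Phi n U ρ) q + Dd w (Uf n U) q / 2) := by
    intro w q hq
    have hRd : DifferentiableAt ℝ (Rf n ρ) q := DiffOn.at hΩ hR hq
    have hUd : DifferentiableAt ℝ (Uf n U) q := (hUf.differentiable (by simp)) q
    have hne := hRne q hq
    have hlog : Dd w (fun q' => Real.log (Rf n ρ q')) q = (Rf n ρ q)⁻¹ * Dd w (Rf n ρ) q := by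
      show fderiv ℝ _ q w = _
      rw [(hRd.hasFDerivAt.log hne).fderiv]; simp [Dd]
    have hUd2 : DifferentiableAt ℝ (fun q' : QQ n => Uf n U q' / 2) q := by
      simpa [div_eq_mul_inv] using hUd.mul_const (2 : ℝ)⁻¹
    have hsplit : Dd w (Phi n U ρ) q
        = Dd w (fun q' => Real.log (Rf n ρ q')) q - Dd w (fun q' => Uf n U q' / 2) q :=
      Dd_sub (hRd.log hne) hUd2 w
    rw [hsplit, hlog, Dd_div_const hUd 2]
    field_simp
    ring
  -- time derivative of Uf vanishes
  have hUt : ∀ q : QQ n, Dd (td n) (Uf n U) q = 0 := fun q => by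
    have h := Dd_comp_snd (f := U) (q := q) ((hU.differentiable (by simp)) q.2) (td n)
    simp only [td] at h
    rw [map_zero] at h
    exact h
  -- second derivative identity
  have star2 : ∀ (i : Fin n), ∀ q ∈ Ω,
      Dd (wd n (Sum.inr i)) (Dd (wd n (Sum.inr i)) (Rf n ρ)) q
      = Rf n ρ q * ((Dd (wd n (Sum.inr i)) (Phi n U ρ) q
            + Dd (wd n (Sum.inr i)) (Uf n U) q / 2) ^ 2
          + Dd (wd n (Sum.inr i)) (Dd (wd n (Sum.inr i)) (Phi n U ρ)) q
          + Dd (wd n (Sum.inr i)) (Dd (wd n (Sum.inr i)) (Uf n U)) q / 2) := by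
    intro i q hq
    set w := wd n (Sum.inr i)
    have e0 : Dd w (Dd w (Rf n ρ)) q
        = Dd w (fun q' => Rf n ρ q' *
            (Dd w (Phi n U ρ) q' + Dd w (Uf n U) q' / 2)) q :=
      Dd_congr_on hΩ (fun x hx => star w x hx) hq w
    have hRd : DifferentiableAt ℝ (Rf n ρ) q := DiffOn.at hΩ hR hq
    have hΦd : DifferentiableAt ℝ (Dd w (Phi n U ρ)) q :=
      DiffOn.at hΩ (Dd_smoothOn hΩ hΦ w) hq
    have hUd : DifferentiableAt ℝ (Dd w (Uf n U)) q := hDU w q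
    have hUd2 : DifferentiableAt ℝ (fun q' : QQ n => Dd w (Uf n U) q' / 2) q := by
      simpa [div_eq_mul_inv] using hUd.mul_const (2 : ℝ)⁻¹
    have hGd : DifferentiableAt ℝ
        (fun q' => Dd w (Phi n U ρ) q' + Dd w (Uf n U) q' / 2) q := hΦd.add hUd2
    rw [e0, Dd_mul hRd hGd w, Dd_add hΦd hUd2 w, Dd_div_const hUd 2, star w q hq]
    ring
  -- final assembly
  intro q hq
  have hne := hRne q hq
  have j := jointPDE q hq
  have hsum1 : (∑ i : Fin n, Dd (wd n (Sum.inr i)) (Dd (wd n (Sum.inr i)) (Rf n ρ)) q)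
      = ∑ i : Fin n, Rf n ρ q * ((Dd (wd n (Sum.inr i)) (Phi n U ρ) q
            + Dd (wd n (Sum.inr i)) (Uf n U) q / 2) ^ 2
          + Dd (wd n (Sum.inr i)) (Dd (wd n (Sum.inr i)) (Phi n U ρ)) q
          + Dd (wd n (Sum.inr i)) (Dd (wd n (Sum.inr i)) (Uf n U)) q / 2) :=
    Finset.sum_congr rfl fun i _ => star2 i q hq
  have hsum2 : (∑ i : Fin n, Dd (wd n (Sum.inr i)) (Uf n U) q
        * Dd (wd n (Sum.inr i)) (Rf n ρ) q)
      = ∑ i : Fin n, Dd (wd n (Sum.inr i)) (Uf n U) q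
        * (Rf n ρ q * (Dd (wd n (Sum.inr i)) (Phi n U ρ) q
            + Dd (wd n (Sum.inr i)) (Uf n U) q / 2)) :=
    Finset.sum_congr rfl fun i _ => by rw [star _ q hq]
  have hsum3 : (∑ i : Fin n, q.2.2 i * Dd (wd n (Sum.inl i)) (Rf n ρ) q)
      = ∑ i : Fin n, q.2.2 i * (Rf n ρ q * (Dd (wd n (Sum.inl i)) (Phi n U ρ) q
            + Dd (wd n (Sum.inl i)) (Uf n U) q / 2)) :=
    Finset.sum_congr rfl fun i _ => by rw [star _ q hq]
  have hT : Dd (td n) (Rf n ρ) q = Rf n ρ q * Dd (td n) (Phi n U ρ) q := by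
    rw [star (td n) q hq, hUt q]; ring
  rw [hT, hsum1, hsum2, hsum3] at j
  -- bridge pd U to Dd on Uf
  have hq1 : q.1 ∈ Ioo 0 T := hq.1
  have ebr1 : ∀ jj, pd U jj q.2 = Dd (wd n jj) (Uf n U) q := by
    intro jj
    have := pd_bridge (Ψ := Uf n U) (t := q.1)
      (fun x => (hUf.differentiable (by simp)) (q.1, x)) jj q.2
    exact this
  have ebr2 : ∀ i : Fin n, pd (pd U (Sum.inr i)) (Sum.inr i) q.2
      = Dd (wd n (Sum.inr i)) (Dd (wd n (Sum.inr i)) (Uf n U)) q := by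
    intro i
    have e0 : pd U (Sum.inr i) = fun x => Dd (wd n (Sum.inr i)) (Uf n U) (q.1, x) :=
      funext fun x => pd_bridge (Ψ := Uf n U)
        (fun x' => (hUf.differentiable (by simp)) (q.1, x')) (Sum.inr i) x
    rw [e0]
    exact pd_bridge (Ψ := Dd (wd n (Sum.inr i)) (Uf n U))
      (fun x => hDU _ (q.1, x)) (Sum.inr i) q.2
  have hhfun : hfun U q.2
      = -(1/2) * (∑ i : Fin n, q.2.2 i * Dd (wd n (Sum.inl i)) (Uf n U) q)
        + (1/2) * (∑ i : Fin n, Dd (wd n (Sum.inr i)) (Dd (wd n (Sum.inr i)) (Uf n U)) q)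
        - (1/4) * ∑ i : Fin n, (Dd (wd n (Sum.inr i)) (Uf n U) q) ^ 2 := by
    unfold hfun lapV
    simp only [ebr1, ebr2]
  refine mul_left_cancel₀ hne ?_
  rw [j, hhfun]
  simp only [mul_add, mul_sub, Finset.mul_sum]
  simp only [← Finset.sum_add_distrib, ← Finset.sum_sub_distrib]
  exact Finset.sum_congr rfl fun i _ => by ring

end HEvol
namespace HEvol

def S1f (n : ℕ) (U : E n × E n → ℝ) (ρ : ℝ → E n × E n → ℝ) : QQ n → ℝ :=
  fun x => ∑ i : Fin n, Dd (wd n (Sum.inr i)) (Dd (wd n (Sum.inr i)) (Phi n U ρ)) x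
def S2f (n : ℕ) (U : E n × E n → ℝ) (ρ : ℝ → E n × E n → ℝ) : QQ n → ℝ :=
  fun x => ∑ i : Fin n, (Dd (wd n (Sum.inr i)) (Phi n U ρ) x) ^ 2
def S3f (n : ℕ) (U : E n × E n → ℝ) (ρ : ℝ → E n × E n → ℝ) : QQ n → ℝ :=
  fun x => ∑ i : Fin n, x.2.2 i * Dd (wd n (Sum.inl i)) (Phi n U ρ) x
def FFf (n : ℕ) (U : E n × E n → ℝ) (ρ : ℝ → E n × E n → ℝ) : QQ n → ℝ :=
  fun x => S1f n U ρ x + S2f n U ρ x - S3f n U ρ x + Hf n U x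

def E1f (n : ℕ) (U : E n × E n → ℝ) (ρ : ℝ → E n × E n → ℝ) (b : Fin n ⊕ Fin n) : QQ n → ℝ :=
  fun x => ∑ i : Fin n,
    Dd (wd n b) (Dd (wd n (Sum.inr i)) (Dd (wd n (Sum.inr i)) (Phi n U ρ))) x
def E2f (n : ℕ) (U : E n × E n → ℝ) (ρ : ℝ → E n × E n → ℝ) (b : Fin n ⊕ Fin n) : QQ n → ℝ :=
  fun x => ∑ i : Fin n,
    2 * (Dd (wd n (Sum.inr i)) (Phi n U ρ) x
      * Dd (wd n b) (Dd (wd n (Sum.inr i)) (Phi n U ρ)) x)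
def E3f (n : ℕ) (U : E n × E n → ℝ) (ρ : ℝ → E n × E n → ℝ) (b : Fin n ⊕ Fin n) : QQ n → ℝ :=
  fun x => ∑ i : Fin n,
    ((stdBasis n b).2 i * Dd (wd n (Sum.inl i)) (Phi n U ρ) x
      + x.2.2 i * Dd (wd n b) (Dd (wd n (Sum.inl i)) (Phi n U ρ)) x)
def GGf (n : ℕ) (U : E n × E n → ℝ) (ρ : ℝ → E n × E n → ℝ) (b : Fin n ⊕ Fin n) : QQ n → ℝ :=
  fun x => E1f n U ρ b x + E2f n U ρ b x - E3f n U ρ b x + Dd (wd n b) (Hf n U) x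

lemma cV_contDiff {n : ℕ} (i : Fin n) : ContDiff ℝ (⊤ : ℕ∞) (fun q' : QQ n => q'.2.2 i) := by
  have hfun : (fun q' : QQ n => q'.2.2 i) = fun q' : QQ n =>
      ((EuclideanSpace.proj i).comp ((ContinuousLinearMap.snd ℝ (E n) (E n)).comp
        (ContinuousLinearMap.snd ℝ ℝ (E n × E n)))) q' := by
    funext q'; simp
  rw [hfun]; exact ContinuousLinearMap.contDiff _

end HEvol

open HEvol

/-- **Evolution equation for the Hessian `M = ∇²g` of `g = log ρ − ½U`** (Section 4):
`∂ₜM = Δ_v M + 2⟨∇_v g, ∇_v M⟩ − ⟨v, ∇ₓM⟩ + MC + CᵀM + MDM + ∇²h`, stated entrywise. -/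
theorem hessian_evolution
    (n : ℕ) (hn : 1 ≤ n) (T : ℝ) (hT : 0 < T)
    (U : E n × E n → ℝ) (hU : ContDiff ℝ (⊤ : ℕ∞) U)
    (ρ : ℝ → E n × E n → ℝ)
    (hρ : ContDiffOn ℝ (⊤ : ℕ∞) (fun q : ℝ × (E n × E n) => ρ q.1 q.2) (Ioo 0 T ×ˢ univ))
    (hpos : ∀ t ∈ Ioo 0 T, ∀ p : E n × E n, 0 < ρ t p)
    (hpde : ∀ t ∈ Ioo 0 T, ∀ p : E n × E n,
      deriv (fun τ => ρ τ p) t =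
        lapV (ρ t) p - (∑ i : Fin n, pd U (Sum.inr i) p * pd (ρ t) (Sum.inr i) p)
          - ∑ i : Fin n, p.2 i * pd (ρ t) (Sum.inl i) p)
    : ∀ t ∈ Ioo 0 T, ∀ p : E n × E n, ∀ a b : Fin n ⊕ Fin n,
      deriv (fun τ => Hess (fun q => Real.log (ρ τ q) - U q / 2) p a b) t
        = lapV (fun q => Hess (fun q' => Real.log (ρ t q') - U q' / 2) q a b) p
          + 2 * (∑ i : Fin n, pd (fun q => Real.log (ρ t q) - U q / 2) (Sum.inr i) p *
              pd (fun q => Hess (fun q' => Real.log (ρ t q') - U q' / 2) q a b) (Sum.inr i) p)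
          - (∑ i : Fin n, p.2 i *
              pd (fun q => Hess (fun q' => Real.log (ρ t q') - U q' / 2) q a b) (Sum.inl i) p)
          + (Hess (fun q => Real.log (ρ t q) - U q / 2) p * Cmat n
              + (Cmat n)ᵀ * Hess (fun q => Real.log (ρ t q) - U q / 2) p
              + Hess (fun q => Real.log (ρ t q) - U q / 2) p * Dmat n *
                  Hess (fun q => Real.log (ρ t q) - U q / 2) p) a b
          + Hess (hfun U) p a b := by
  intro t ht p a b
  have hΩ : IsOpen (Ioo 0 T ×ˢ univ : Set (QQ n)) := isOpen_Ioo.prod isOpen_univ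
  set Ω : Set (QQ n) := Ioo 0 T ×ˢ univ with hΩdef
  have hmem : ∀ {τ : ℝ}, τ ∈ Ioo 0 T → ∀ x : E n × E n, ((τ, x) : QQ n) ∈ Ω :=
    fun hτ x => ⟨hτ, mem_univ x⟩
  have hz : ((t, p) : QQ n) ∈ Ω := hmem ht p
  have hR : ContDiffOn ℝ (⊤ : ℕ∞) (Rf n ρ) Ω := hρ
  have hRne : ∀ q ∈ Ω, Rf n ρ q ≠ 0 := fun q hq => (hpos q.1 hq.1 q.2).ne'
  have hUf : ContDiff ℝ (⊤ : ℕ∞) (Uf n U) := hU.comp contDiff_snd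
  have hΦ : ContDiffOn ℝ (⊤ : ℕ∞) (Phi n U ρ) Ω :=
    (hR.log hRne).sub (hUf.contDiffOn.div_const (2 : ℝ))
  have s1 : ∀ w, ContDiffOn ℝ (⊤ : ℕ∞) (Dd w (Phi n U ρ)) Ω := fun w => Dd_smoothOn hΩ hΦ w
  have s2 : ∀ w w', ContDiffOn ℝ (⊤ : ℕ∞) (Dd w (Dd w' (Phi n U ρ))) Ω := fun w w' =>
    Dd_smoothOn hΩ (s1 w') w
  have s3 : ∀ w w' w'', ContDiffOn ℝ (⊤ : ℕ∞) (Dd w (Dd w' (Dd w'' (Phi n U ρ)))) Ω :=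
    fun w w' w'' => Dd_smoothOn hΩ (s2 w' w'') w
  have dAt : ∀ {f : QQ n → ℝ}, ContDiffOn ℝ (⊤ : ℕ∞) f Ω → ∀ {τ : ℝ}, τ ∈ Ioo 0 T →
      ∀ x : E n × E n, DifferentiableAt ℝ f (τ, x) :=
    fun {f} hf {τ} hτ x => DiffOn.at hΩ hf (hmem hτ x)
  have hHs : ContDiff ℝ (⊤ : ℕ∞) (Hf n U) := (hfun_contDiff hU).comp contDiff_snd
  have hDH : ∀ w, ContDiff ℝ (⊤ : ℕ∞) (Dd w (Hf n U)) := fun w =>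
    (hHs.fderiv_right (by simp)).clm_apply contDiff_const
  -- Bridge for the Hessian entries of g
  have hHessBr : ∀ τ, τ ∈ Ioo 0 T → ∀ (x : E n × E n) (i j : Fin n ⊕ Fin n),
      Hess (fun q => Real.log (ρ τ q) - U q / 2) x i j
        = Dd (wd n i) (Dd (wd n j) (Phi n U ρ)) (τ, x) := fun τ hτ x i j =>
    Hess_bridge (Ψ := Phi n U ρ) (fun x' => dAt hΦ hτ x') (fun b' x' => dAt (s1 _) hτ x') i j x
  -- Bridge the left-hand side
  have eL : deriv (fun τ => Hess (fun q => Real.log (ρ τ q) - U q / 2) p a b) t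
      = Dd (td n) (Dd (wd n a) (Dd (wd n b) (Phi n U ρ))) (t, p) := by
    have he : (fun τ => Hess (fun q => Real.log (ρ τ q) - U q / 2) p a b)
        =ᶠ[nhds t] fun τ => Dd (wd n a) (Dd (wd n b) (Phi n U ρ)) (τ, p) := by
      filter_upwards [isOpen_Ioo.mem_nhds ht] with τ hτ
      exact hHessBr τ hτ p a b
    rw [he.deriv_eq]
    exact bridge_fst (Ψ := Dd (wd n a) (Dd (wd n b) (Phi n U ρ))) (dAt (s2 _ _) ht p)
  -- Bridge the inner function q ↦ Hess g q a b
  have eIn : (fun q => Hess (fun q' => Real.log (ρ t q') - U q' / 2) q a b)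
      = fun x => Dd (wd n a) (Dd (wd n b) (Phi n U ρ)) (t, x) :=
    funext fun x => hHessBr t ht x a b
  have e1 : lapV (fun x => Dd (wd n a) (Dd (wd n b) (Phi n U ρ)) (t, x)) p
      = ∑ i : Fin n, Dd (wd n (Sum.inr i)) (Dd (wd n (Sum.inr i))
          (Dd (wd n a) (Dd (wd n b) (Phi n U ρ)))) (t, p) := by
    unfold lapV
    refine Finset.sum_congr rfl fun i _ => ?_
    have e0 : pd (fun x => Dd (wd n a) (Dd (wd n b) (Phi n U ρ)) (t, x)) (Sum.inr i)
        = fun x => Dd (wd n (Sum.inr i)) (Dd (wd n a) (Dd (wd n b) (Phi n U ρ))) (t, x) :=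
      funext fun x => pd_bridge (fun x' => dAt (s2 _ _) ht x') (Sum.inr i) x
    rw [e0]
    exact pd_bridge (fun x => dAt (s3 _ _ _) ht x) (Sum.inr i) p
  have e2 : ∀ j, pd (fun q => Real.log (ρ t q) - U q / 2) j p
      = Dd (wd n j) (Phi n U ρ) (t, p) := fun j =>
    pd_bridge (Ψ := Phi n U ρ) (fun x => dAt hΦ ht x) j p
  have e3 : ∀ j, pd (fun x => Dd (wd n a) (Dd (wd n b) (Phi n U ρ)) (t, x)) j p
      = Dd (wd n j) (Dd (wd n a) (Dd (wd n b) (Phi n U ρ))) (t, p) := fun j =>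
    pd_bridge (fun x => dAt (s2 _ _) ht x) j p
  have e5 : Hess (hfun U) p a b = Dd (wd n a) (Dd (wd n b) (Hf n U)) (t, p) :=
    Hess_bridge (Ψ := Hf n U) (fun x => (hHs.differentiable (by simp)) (t, x))
      (fun b' x => ((hDH _).differentiable (by simp)) (t, x)) a b p
  rw [eL, eIn, e1, e5, matrix_term n _ a b]
  simp only [e2, e3, hHessBr t ht]
  -- Now everything is in terms of Dd at (t, p).  Derive the evolution identity.
  have sp := scalarPDE n T U hU ρ hρ hpos hpde
  have step1 : Dd (td n) (Dd (wd n a) (Dd (wd n b) (Phi n U ρ))) (t, p)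
      = Dd (wd n a) (Dd (wd n b) (Dd (td n) (Phi n U ρ))) (t, p) :=
    (Dd_cycle hΩ hΦ hz (wd n a) (wd n b) (td n)).symm
  have step2 : Dd (wd n a) (Dd (wd n b) (Dd (td n) (Phi n U ρ))) (t, p)
      = Dd (wd n a) (Dd (wd n b) (FFf n U ρ)) (t, p) :=
    Dd_congr_on hΩ (fun x hx => Dd_congr_on hΩ (fun y hy => sp y hy) hx (wd n b)) hz (wd n a)
  -- smoothness of the pieces
  have scV : ∀ i : Fin n, ContDiffOn ℝ (⊤ : ℕ∞) (fun q' : QQ n => q'.2.2 i) Ω := fun i =>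
    (cV_contDiff i).contDiffOn
  have sS1 : ContDiffOn ℝ (⊤ : ℕ∞) (S1f n U ρ) Ω := ContDiffOn.sum fun i _ => s2 _ _
  have sS2 : ContDiffOn ℝ (⊤ : ℕ∞) (S2f n U ρ) Ω := ContDiffOn.sum fun i _ => (s1 _).pow 2
  have sS3 : ContDiffOn ℝ (⊤ : ℕ∞) (S3f n U ρ) Ω := ContDiffOn.sum fun i _ => (scV i).mul (s1 _)
  have sE1 : ContDiffOn ℝ (⊤ : ℕ∞) (E1f n U ρ b) Ω := ContDiffOn.sum fun i _ => s3 _ _ _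
  have sE2 : ContDiffOn ℝ (⊤ : ℕ∞) (E2f n U ρ b) Ω :=
    ContDiffOn.sum fun i _ => contDiffOn_const.mul ((s1 _).mul (s2 _ _))
  have sE3 : ContDiffOn ℝ (⊤ : ℕ∞) (E3f n U ρ b) Ω :=
    ContDiffOn.sum fun i _ =>
      (contDiffOn_const.mul (s1 _)).add ((scV i).mul (s2 _ _))
  -- expansion of Dd B (FFf)
  have step3 : ∀ x ∈ Ω, Dd (wd n b) (FFf n U ρ) x
      = E1f n U ρ b x + E2f n U ρ b x - E3f n U ρ b x + Dd (wd n b) (Hf n U) x := by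
    intro x hx
    have d1 : DifferentiableAt ℝ (S1f n U ρ) x := DiffOn.at hΩ sS1 hx
    have d2 : DifferentiableAt ℝ (S2f n U ρ) x := DiffOn.at hΩ sS2 hx
    have d3 : DifferentiableAt ℝ (S3f n U ρ) x := DiffOn.at hΩ sS3 hx
    have dH : DifferentiableAt ℝ (Hf n U) x := (hHs.differentiable (by simp)) x
    have h1 : Dd (wd n b) (FFf n U ρ) x
        = Dd (wd n b) (fun y => S1f n U ρ y + S2f n U ρ y - S3f n U ρ y) x
          + Dd (wd n b) (Hf n U) x :=
      Dd_add (f := fun y => S1f n U ρ y + S2f n U ρ y - S3f n U ρ y) (g := Hf n U)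
        ((d1.add d2).sub d3) dH (wd n b)
    have h2 : Dd (wd n b) (fun y => S1f n U ρ y + S2f n U ρ y - S3f n U ρ y) x
        = Dd (wd n b) (fun y => S1f n U ρ y + S2f n U ρ y) x - Dd (wd n b) (S3f n U ρ) x :=
      Dd_sub (f := fun y => S1f n U ρ y + S2f n U ρ y) (g := S3f n U ρ) (d1.add d2) d3 _
    have h3 : Dd (wd n b) (fun y => S1f n U ρ y + S2f n U ρ y) x
        = Dd (wd n b) (S1f n U ρ) x + Dd (wd n b) (S2f n U ρ) x :=
      Dd_add (f := S1f n U ρ) (g := S2f n U ρ) d1 d2 _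
    have h4 : Dd (wd n b) (S1f n U ρ) x = E1f n U ρ b x :=
      Dd_sum (fun i _ => DiffOn.at hΩ (s2 _ _) hx) (wd n b)
    have h5 : Dd (wd n b) (S2f n U ρ) x = E2f n U ρ b x := by
      rw [show S2f n U ρ = fun y => ∑ i : Fin n,
          (fun y' => (Dd (wd n (Sum.inr i)) (Phi n U ρ) y') ^ 2) y from rfl]
      rw [Dd_sum (f := fun i y' => (Dd (wd n (Sum.inr i)) (Phi n U ρ) y') ^ 2)
        (fun i _ => (DiffOn.at hΩ (s1 _) hx).pow 2) (wd n b)]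
      refine Finset.sum_congr rfl fun i _ => ?_
      have hsq : (fun y' => (Dd (wd n (Sum.inr i)) (Phi n U ρ) y') ^ 2)
          = fun y' => Dd (wd n (Sum.inr i)) (Phi n U ρ) y'
              * Dd (wd n (Sum.inr i)) (Phi n U ρ) y' := funext fun y' => sq _
      rw [hsq, Dd_mul (DiffOn.at hΩ (s1 _) hx) (DiffOn.at hΩ (s1 _) hx) (wd n b)]
      ring
    have h6 : Dd (wd n b) (S3f n U ρ) x = E3f n U ρ b x := by
      rw [show S3f n U ρ = fun y => ∑ i : Fin n,
          (fun y' => y'.2.2 i * Dd (wd n (Sum.inl i)) (Phi n U ρ) y') y from rfl]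
      rw [Dd_sum (f := fun i y' => y'.2.2 i * Dd (wd n (Sum.inl i)) (Phi n U ρ) y')
        (fun i _ => ((diffcV i) x).mul (DiffOn.at hΩ (s1 _) hx)) (wd n b)]
      refine Finset.sum_congr rfl fun i _ => ?_
      rw [Dd_mul ((diffcV i) x) (DiffOn.at hΩ (s1 _) hx) (wd n b), Dd_cV]
      show x.2.2 i * Dd (wd n b) (Dd (wd n (Sum.inl i)) (Phi n U ρ)) x
          + Dd (wd n (Sum.inl i)) (Phi n U ρ) x * (stdBasis n b).2 i = _
      ring
    rw [h1, h2, h3, h4, h5, h6]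
  have step4 : Dd (wd n a) (Dd (wd n b) (FFf n U ρ)) (t, p)
      = Dd (wd n a) (GGf n U ρ b) (t, p) :=
    Dd_congr_on hΩ step3 hz (wd n a)
  -- expansion of Dd A (GGf)
  have dE1 : DifferentiableAt ℝ (E1f n U ρ b) (t, p) := DiffOn.at hΩ sE1 hz
  have dE2 : DifferentiableAt ℝ (E2f n U ρ b) (t, p) := DiffOn.at hΩ sE2 hz
  have dE3 : DifferentiableAt ℝ (E3f n U ρ b) (t, p) := DiffOn.at hΩ sE3 hz
  have dDH : DifferentiableAt ℝ (Dd (wd n b) (Hf n U)) (t, p) :=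
    ((hDH _).differentiable (by simp)) _
  have step5 : Dd (wd n a) (GGf n U ρ b) (t, p)
      = Dd (wd n a) (E1f n U ρ b) (t, p) + Dd (wd n a) (E2f n U ρ b) (t, p)
        - Dd (wd n a) (E3f n U ρ b) (t, p) + Dd (wd n a) (Dd (wd n b) (Hf n U)) (t, p) := by
    have h1 : Dd (wd n a) (GGf n U ρ b) (t, p)
        = Dd (wd n a) (fun y => E1f n U ρ b y + E2f n U ρ b y - E3f n U ρ b y) (t, p)
          + Dd (wd n a) (Dd (wd n b) (Hf n U)) (t, p) :=
      Dd_add (f := fun y => E1f n U ρ b y + E2f n U ρ b y - E3f n U ρ b y)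
        (g := Dd (wd n b) (Hf n U)) ((dE1.add dE2).sub dE3) dDH _
    have h2 := Dd_sub (f := fun y => E1f n U ρ b y + E2f n U ρ b y) (g := E3f n U ρ b)
      (dE1.add dE2) dE3 (wd n a) (q := ((t, p) : QQ n))
    have h3 := Dd_add (f := E1f n U ρ b) (g := E2f n U ρ b) dE1 dE2 (wd n a)
      (q := ((t, p) : QQ n))
    rw [h1, h2, h3]
  have h4' : Dd (wd n a) (E1f n U ρ b) (t, p)
      = ∑ i : Fin n, Dd (wd n a) (Dd (wd n b)
          (Dd (wd n (Sum.inr i)) (Dd (wd n (Sum.inr i)) (Phi n U ρ)))) (t, p) :=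
    Dd_sum (fun i _ => DiffOn.at hΩ (Dd_smoothOn hΩ (s2 _ _) _) hz) (wd n a)
  have h5' : Dd (wd n a) (E2f n U ρ b) (t, p)
      = ∑ i : Fin n, 2 * (Dd (wd n a) (Dd (wd n (Sum.inr i)) (Phi n U ρ)) (t, p)
            * Dd (wd n b) (Dd (wd n (Sum.inr i)) (Phi n U ρ)) (t, p)
          + Dd (wd n (Sum.inr i)) (Phi n U ρ) (t, p)
            * Dd (wd n a) (Dd (wd n b) (Dd (wd n (Sum.inr i)) (Phi n U ρ))) (t, p)) := by
    rw [show E2f n U ρ b = fun y => ∑ i : Fin n,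
        (fun y' => 2 * (Dd (wd n (Sum.inr i)) (Phi n U ρ) y'
          * Dd (wd n b) (Dd (wd n (Sum.inr i)) (Phi n U ρ)) y')) y from rfl]
    rw [Dd_sum (f := fun i y' => 2 * (Dd (wd n (Sum.inr i)) (Phi n U ρ) y'
          * Dd (wd n b) (Dd (wd n (Sum.inr i)) (Phi n U ρ)) y'))
      (fun i _ => ((DiffOn.at hΩ (s1 _) hz).mul
      (DiffOn.at hΩ (s2 _ _) hz)).const_mul 2) (wd n a)]
    refine Finset.sum_congr rfl fun i _ => ?_
    rw [Dd_const_mul (f := fun y' => Dd (wd n (Sum.inr i)) (Phi n U ρ) y'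
          * Dd (wd n b) (Dd (wd n (Sum.inr i)) (Phi n U ρ)) y')
        ((DiffOn.at hΩ (s1 _) hz).mul (DiffOn.at hΩ (s2 _ _) hz)) 2,
      Dd_mul (DiffOn.at hΩ (s1 _) hz) (DiffOn.at hΩ (s2 _ _) hz)]
    ring
  have h6' : Dd (wd n a) (E3f n U ρ b) (t, p)
      = ∑ i : Fin n, ((stdBasis n b).2 i
            * Dd (wd n a) (Dd (wd n (Sum.inl i)) (Phi n U ρ)) (t, p)
          + ((stdBasis n a).2 i * Dd (wd n b) (Dd (wd n (Sum.inl i)) (Phi n U ρ)) (t, p)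
            + p.2 i * Dd (wd n a) (Dd (wd n b)
                (Dd (wd n (Sum.inl i)) (Phi n U ρ))) (t, p))) := by
    rw [show E3f n U ρ b = fun y => ∑ i : Fin n,
        (fun y' => (stdBasis n b).2 i * Dd (wd n (Sum.inl i)) (Phi n U ρ) y'
          + y'.2.2 i * Dd (wd n b) (Dd (wd n (Sum.inl i)) (Phi n U ρ)) y') y from rfl]
    rw [Dd_sum (f := fun i y' => (stdBasis n b).2 i * Dd (wd n (Sum.inl i)) (Phi n U ρ) y'
          + y'.2.2 i * Dd (wd n b) (Dd (wd n (Sum.inl i)) (Phi n U ρ)) y')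
      (fun i _ => ((DiffOn.at hΩ (s1 _) hz).const_mul _).add
      (((diffcV i) _).mul (DiffOn.at hΩ (s2 _ _) hz))) (wd n a)]
    refine Finset.sum_congr rfl fun i _ => ?_
    rw [Dd_add (f := fun y' => (stdBasis n b).2 i * Dd (wd n (Sum.inl i)) (Phi n U ρ) y')
        (g := fun y' => y'.2.2 i * Dd (wd n b) (Dd (wd n (Sum.inl i)) (Phi n U ρ)) y')
        ((DiffOn.at hΩ (s1 _) hz).const_mul _)
        (((diffcV i) _).mul (DiffOn.at hΩ (s2 _ _) hz)),
      Dd_const_mul (DiffOn.at hΩ (s1 _) hz) _,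
      Dd_mul ((diffcV i) _) (DiffOn.at hΩ (s2 _ _) hz), Dd_cV]
    show (stdBasis n b).2 i * Dd (wd n a) (Dd (wd n (Sum.inl i)) (Phi n U ρ)) (t, p)
        + ((t, p).2.2 i * Dd (wd n a) (Dd (wd n b) (Dd (wd n (Sum.inl i)) (Phi n U ρ))) (t, p)
          + Dd (wd n b) (Dd (wd n (Sum.inl i)) (Phi n U ρ)) (t, p) * (stdBasis n a).2 i) = _
    ring
  -- commutation of derivatives
  have cm1 : ∀ i : Fin n, Dd (wd n a) (Dd (wd n b)
        (Dd (wd n (Sum.inr i)) (Dd (wd n (Sum.inr i)) (Phi n U ρ)))) (t, p)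
      = Dd (wd n (Sum.inr i)) (Dd (wd n (Sum.inr i))
          (Dd (wd n a) (Dd (wd n b) (Phi n U ρ)))) (t, p) := by
    intro i
    rw [Dd_cycle hΩ (s1 (wd n (Sum.inr i))) hz (wd n a) (wd n b) (wd n (Sum.inr i))]
    exact Dd_congr_on hΩ (fun x hx => Dd_cycle hΩ hΦ hx (wd n a) (wd n b) (wd n (Sum.inr i)))
      hz (wd n (Sum.inr i))
  have cm2 : ∀ i : Fin n, Dd (wd n a) (Dd (wd n b)
        (Dd (wd n (Sum.inr i)) (Phi n U ρ))) (t, p)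
      = Dd (wd n (Sum.inr i)) (Dd (wd n a) (Dd (wd n b) (Phi n U ρ))) (t, p) := fun i =>
    Dd_cycle hΩ hΦ hz (wd n a) (wd n b) (wd n (Sum.inr i))
  have cm3 : ∀ i : Fin n, Dd (wd n a) (Dd (wd n b)
        (Dd (wd n (Sum.inl i)) (Phi n U ρ))) (t, p)
      = Dd (wd n (Sum.inl i)) (Dd (wd n a) (Dd (wd n b) (Phi n U ρ))) (t, p) := fun i =>
    Dd_cycle hΩ hΦ hz (wd n a) (wd n b) (wd n (Sum.inl i))
  have cm4 : ∀ j : Fin n ⊕ Fin n, Dd (wd n b) (Dd (wd n j) (Phi n U ρ)) (t, p)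
      = Dd (wd n j) (Dd (wd n b) (Phi n U ρ)) (t, p) := fun j =>
    Dd_swap hΩ hΦ hz (wd n b) (wd n j)
  -- elim sums
  have eb : ∑ i : Fin n, (stdBasis n b).2 i
        * Dd (wd n a) (Dd (wd n (Sum.inl i)) (Phi n U ρ)) (t, p)
      = Sum.elim (fun _ => (0 : ℝ))
          (fun j => Dd (wd n a) (Dd (wd n (Sum.inl j)) (Phi n U ρ)) (t, p)) b := by
    rcases b with j | j
    · simp [stdBasis_snd_inl]
    · simp [stdBasis_snd_inr, ite_mul, Finset.sum_ite_eq, Finset.sum_ite_eq']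
  have ea : ∑ i : Fin n, (stdBasis n a).2 i
        * Dd (wd n (Sum.inl i)) (Dd (wd n b) (Phi n U ρ)) (t, p)
      = Sum.elim (fun _ => (0 : ℝ))
          (fun i => Dd (wd n (Sum.inl i)) (Dd (wd n b) (Phi n U ρ)) (t, p)) a := by
    rcases a with i | i
    · simp [stdBasis_snd_inl]
    · simp [stdBasis_snd_inr, ite_mul, Finset.sum_ite_eq, Finset.sum_ite_eq']
  -- put everything together
  rw [step1, step2, step4, step5, h4', h5', h6']
  simp only [cm1, cm2, cm3, cm4]
  have he2 : (∑ i : Fin n, 2 * (Dd (wd n a) (Dd (wd n (Sum.inr i)) (Phi n U ρ)) (t, p)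
        * Dd (wd n (Sum.inr i)) (Dd (wd n b) (Phi n U ρ)) (t, p)
      + Dd (wd n (Sum.inr i)) (Phi n U ρ) (t, p)
        * Dd (wd n (Sum.inr i)) (Dd (wd n a) (Dd (wd n b) (Phi n U ρ))) (t, p)))
      = 2 * (∑ i : Fin n, Dd (wd n a) (Dd (wd n (Sum.inr i)) (Phi n U ρ)) (t, p)
          * Dd (wd n (Sum.inr i)) (Dd (wd n b) (Phi n U ρ)) (t, p))
        + 2 * (∑ i : Fin n, Dd (wd n (Sum.inr i)) (Phi n U ρ) (t, p)
          * Dd (wd n (Sum.inr i)) (Dd (wd n a) (Dd (wd n b) (Phi n U ρ))) (t, p)) := by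
    simp only [Finset.mul_sum, ← Finset.sum_add_distrib]
    exact Finset.sum_congr rfl fun i _ => by ring
  have he3 : (∑ i : Fin n, ((stdBasis n b).2 i
        * Dd (wd n a) (Dd (wd n (Sum.inl i)) (Phi n U ρ)) (t, p)
      + ((stdBasis n a).2 i * Dd (wd n (Sum.inl i)) (Dd (wd n b) (Phi n U ρ)) (t, p)
        + p.2 i * Dd (wd n (Sum.inl i)) (Dd (wd n a) (Dd (wd n b) (Phi n U ρ))) (t, p))))
      = (∑ i : Fin n, (stdBasis n b).2 i
          * Dd (wd n a) (Dd (wd n (Sum.inl i)) (Phi n U ρ)) (t, p))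
        + (∑ i : Fin n, (stdBasis n a).2 i
          * Dd (wd n (Sum.inl i)) (Dd (wd n b) (Phi n U ρ)) (t, p))
        + ∑ i : Fin n, p.2 i
          * Dd (wd n (Sum.inl i)) (Dd (wd n a) (Dd (wd n b) (Phi n U ρ))) (t, p) := by
    simp only [← Finset.sum_add_distrib]
    exact Finset.sum_congr rfl fun i _ => by ring
  rw [he2, he3, eb, ea]
  ring
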